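/- Let m be a positive integer and let P be an m×m binary symmetric matrix with zero diagonal, its 0/1 entries lifted to ℤ₄. Define S = Σ_{x ∈ {0,1}^m} i^{x P xᵀ}, where the quadratic form x P xᵀ is evaluated in ℤ₄. Then S² = 2^m · Σ_{z ∈ {0,1}^m, zP ≡ 0 (mod 2)} i^{z P zᵀ}, where the sum on the right ranges over the binary vectors z in the F₂-kernel of P. -/
import Mathlib


noncomputable section

namespace DGPaper

/-- The absolute trace `GF(2^m) → 𝔽₂`. -/
def tr {m : ℕ} (x : GaloisField 2 m) : ZMod 2 :=
  Algebra.trace (ZMod 2) (GaloisField 2 m) x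

/-- Lift a bit to `ℤ₄`. -/
def lift2 (v : ZMod 2) : ZMod 4 := (v.val : ZMod 4)

/-- `i^v` for `v ∈ ℤ₄`. -/
def zeta (v : ZMod 4) : ℂ := Complex.I ^ v.val

/-- The field element of `GF(2^m)` associated to a binary `m`-tuple via the basis
`1, ξ, …, ξ^{m-1}`. -/
def fld {m : ℕ} (ξ : GaloisField 2 m) (x : Fin m → ZMod 2) : GaloisField 2 m :=
  ∑ j : Fin m, x j • ξ ^ (j : ℕ)

/-- The binary symmetric matrix `P^t(a)`: for `t = 0` it represents the bilinear form
`(x,y) ↦ Tr(x y a)`, and for `t ≥ 1` the (zero-diagonal) form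
`(x,y) ↦ Tr((x y^{2^t} + x^{2^t} y) a)`, in the basis `1, ξ, …, ξ^{m-1}` of `GF(2^m)`
over `𝔽₂`. -/
def Pmat {m : ℕ} (ξ : GaloisField 2 m) (t : ℕ) (a : GaloisField 2 m) :
    Matrix (Fin m) (Fin m) (ZMod 2) :=
  Matrix.of fun i j =>
    if t = 0 then tr (ξ ^ (i : ℕ) * ξ ^ (j : ℕ) * a)
    else tr ((ξ ^ (i : ℕ) * (ξ ^ (j : ℕ)) ^ (2 ^ t) + (ξ ^ (i : ℕ)) ^ (2 ^ t) * ξ ^ (j : ℕ)) * a)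

/-- The quadratic form `x P xᵀ` evaluated in `ℤ₄` (the `0/1` entries of `P` and `x`
being lifted to `ℤ₄`). -/
def qform {m : ℕ} (P : Matrix (Fin m) (Fin m) (ZMod 2)) (x : Fin m → ZMod 2) : ZMod 4 :=
  ∑ i : Fin m, ∑ j : Fin m, lift2 (x i) * lift2 (P i j) * lift2 (x j)

instance {m : ℕ} : Fintype (GaloisField 2 m) := Fintype.ofFinite _

open Finset

/-- `(-1)^v` for a bit `v`. -/
def eps (v : ZMod 2) : ℂ := (-1) ^ v.val

lemma zmod2_cases (a : ZMod 2) : a = 0 ∨ a = 1 := by revert a; decide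

lemma eps_zero : eps 0 = 1 := by simp [eps]

lemma eps_add (a b : ZMod 2) : eps (a + b) = eps a * eps b := by
  rcases zmod2_cases a with ha | ha <;> rcases zmod2_cases b with hb | hb <;>
    subst ha <;> subst hb <;>
    simp only [show (0:ZMod 2)+0 = 0 from rfl, show (0:ZMod 2)+1 = 1 from rfl,
      show (1:ZMod 2)+0 = 1 from rfl, show (1:ZMod 2)+1 = 0 by decide] <;>
    norm_num [eps, ZMod.val_zero, ZMod.val_one]

lemma eps_sum {α : Type*} (s : Finset α) (g : α → ZMod 2) :
    eps (∑ a ∈ s, g a) = ∏ a ∈ s, eps (g a) := by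
  classical
  induction s using Finset.cons_induction with
  | empty => simp [eps_zero]
  | cons a s ha ih => rw [Finset.sum_cons, Finset.prod_cons, eps_add, ih]

lemma zeta_zero : zeta 0 = 1 := by simp [zeta]

lemma I_pow_mod_four (n : ℕ) : Complex.I ^ (n % 4) = Complex.I ^ n := by
  conv_rhs => rw [← Nat.div_add_mod n 4, pow_add, pow_mul, Complex.I_pow_four, one_pow, one_mul]

lemma zeta_add (a b : ZMod 4) : zeta (a + b) = zeta a * zeta b := by
  unfold zeta
  rw [ZMod.val_add, I_pow_mod_four, pow_add]

lemma zeta_sum {α : Type*} (s : Finset α) (g : α → ZMod 4) :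
    zeta (∑ a ∈ s, g a) = ∏ a ∈ s, zeta (g a) := by
  classical
  induction s using Finset.cons_induction with
  | empty => simp [zeta_zero]
  | cons a s ha ih => rw [Finset.sum_cons, Finset.prod_cons, zeta_add, ih]

lemma lift2_mul (a b : ZMod 2) : lift2 (a * b) = lift2 a * lift2 b := by revert a b; decide

lemma zeta_lift_add_self (v : ZMod 2) : zeta (lift2 v + lift2 v) = eps v := by
  rcases zmod2_cases v with h | h <;> subst h
  · rw [show lift2 0 + lift2 0 = 0 by decide, zeta_zero, eps_zero]
  · rw [show lift2 1 + lift2 1 = 2 by decide]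
    rw [show zeta 2 = Complex.I ^ 2 from rfl, Complex.I_sq]
    norm_num [eps, ZMod.val_one]

/-- The set of pairs `i < j`. -/
def pairs (m : ℕ) : Finset (Fin m × Fin m) :=
  Finset.univ.filter fun p => p.1 < p.2

lemma sum_eq_sum_pairs {M : Type*} [AddCommMonoid M] {m : ℕ} (f : Fin m → Fin m → M)
    (hdiag : ∀ i, f i i = 0) :
    ∑ i, ∑ j, f i j = ∑ p ∈ pairs m, (f p.1 p.2 + f p.2 p.1) := by
  classical
  rw [← Finset.sum_product', Finset.univ_product_univ]
  rw [← Finset.sum_filter_add_sum_filter_not Finset.univ (fun p : Fin m × Fin m => p.1 < p.2)]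
  rw [Finset.sum_add_distrib]
  congr 1
  have h2 : ∑ p ∈ Finset.univ.filter (fun p : Fin m × Fin m => ¬ p.1 < p.2), f p.1 p.2
      = ∑ p ∈ Finset.univ.filter
          (fun p : Fin m × Fin m => p.2 < p.1), f p.1 p.2 := by
    rw [← Finset.sum_filter_add_sum_filter_not
        (Finset.univ.filter (fun p : Fin m × Fin m => ¬ p.1 < p.2))
        (fun p : Fin m × Fin m => p.1 = p.2)]
    have hz : ∑ p ∈ (Finset.univ.filter (fun p : Fin m × Fin m => ¬ p.1 < p.2)).filter
        (fun p : Fin m × Fin m => p.1 = p.2), f p.1 p.2 = 0 := by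
      refine Finset.sum_eq_zero fun p hp => ?_
      simp only [Finset.mem_filter] at hp
      rw [hp.2]; exact hdiag p.2
    rw [hz, zero_add]
    congr 1
    ext p
    simp only [Finset.mem_filter, Finset.filter_filter, Finset.mem_univ, true_and]
    omega
  rw [h2]
  refine Finset.sum_nbij' (fun p => (p.2, p.1)) (fun p => (p.2, p.1)) ?_ ?_ ?_ ?_ ?_
  · intro p hp; simp only [Finset.mem_filter, Finset.mem_univ, true_and, pairs] at *; exact hp
  · intro p hp; simp only [Finset.mem_filter, Finset.mem_univ, true_and, pairs] at *; exact hp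
  · intro p _; rfl
  · intro p _; rfl
  · intro p _; rfl



variable {m : ℕ} (P : Matrix (Fin m) (Fin m) (ZMod 2))

/-- The `𝔽₂`-valued quadratic form over pairs `i < j`. -/
def qf2 (x : Fin m → ZMod 2) : ZMod 2 := ∑ p ∈ pairs m, x p.1 * P p.1 p.2 * x p.2

lemma eps_sq (v : ZMod 2) : eps v * eps v = 1 := by
  rcases zmod2_cases v with h | h <;> subst h <;> norm_num [eps, ZMod.val_one]

lemma zeta_qform (hsymm : P.IsSymm) (hdiag : ∀ i, P i i = 0) (x : Fin m → ZMod 2) :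
    zeta (qform P x) = eps (qf2 P x) := by
  have h1 : qform P x = ∑ p ∈ pairs m,
      (lift2 (x p.1 * P p.1 p.2 * x p.2) + lift2 (x p.1 * P p.1 p.2 * x p.2)) := by
    rw [qform, sum_eq_sum_pairs (fun i j => lift2 (x i) * lift2 (P i j) * lift2 (x j))
      (fun i => by
        show lift2 (x i) * lift2 (P i i) * lift2 (x i) = 0
        rw [hdiag i]; simp [lift2])]
    refine Finset.sum_congr rfl fun p hp => ?_
    rw [lift2_mul, lift2_mul, hsymm.apply p.1 p.2]
    ring
  rw [h1, zeta_sum, qf2, eps_sum]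
  exact Finset.prod_congr rfl fun p _ => zeta_lift_add_self _

lemma qf2_addv (hsymm : P.IsSymm) (hdiag : ∀ i, P i i = 0) (x z : Fin m → ZMod 2) :
    qf2 P (x + z) = qf2 P x + qf2 P z + ∑ j, Matrix.vecMul z P j * x j := by
  have hB : ∑ j, Matrix.vecMul z P j * x j
      = ∑ p ∈ pairs m, (z p.1 * P p.1 p.2 * x p.2 + x p.1 * P p.1 p.2 * z p.2) := by
    rw [show (∑ j, Matrix.vecMul z P j * x j) = ∑ j, ∑ i, z i * P i j * x j by
      refine Finset.sum_congr rfl fun j _ => ?_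
      simp [Matrix.vecMul, dotProduct, Finset.sum_mul, mul_assoc]]
    rw [Finset.sum_comm]
    rw [sum_eq_sum_pairs (fun i j => z i * P i j * x j) (fun i => by
      show z i * P i i * x i = 0
      rw [hdiag i]; ring)]
    refine Finset.sum_congr rfl fun p _ => ?_
    rw [hsymm.apply p.1 p.2]
    ring
  rw [hB, qf2, qf2, qf2, ← Finset.sum_add_distrib, ← Finset.sum_add_distrib]
  refine Finset.sum_congr rfl fun p _ => ?_
  simp only [Pi.add_apply]
  ring

lemma eps_orth (w : Fin m → ZMod 2) :
    ∑ x : Fin m → ZMod 2, eps (∑ j, w j * x j) = if w = 0 then (2:ℂ)^m else 0 := by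
  classical
  calc ∑ x : Fin m → ZMod 2, eps (∑ j, w j * x j)
      = ∑ x : Fin m → ZMod 2, ∏ j, eps (w j * x j) :=
        Finset.sum_congr rfl fun x _ => eps_sum _ _
    _ = ∏ j, ∑ b : ZMod 2, eps (w j * b) := by
        rw [Finset.prod_univ_sum (fun _ => Finset.univ) (fun j b => eps (w j * b)),
          Fintype.piFinset_univ]
    _ = if w = 0 then (2:ℂ)^m else 0 := by
        by_cases hw : w = 0
        · subst hw
          simp only [Pi.zero_apply, zero_mul, eps_zero, if_pos rfl]
          rw [show (∑ _b : ZMod 2, (1:ℂ)) = 2 by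
            rw [Finset.sum_const, Finset.card_univ, ZMod.card]
            norm_num]
          rw [Finset.prod_const, Finset.card_univ, Fintype.card_fin]
          simp
        · rw [if_neg hw]
          obtain ⟨j, hj⟩ := Function.ne_iff.mp hw
          refine Finset.prod_eq_zero (Finset.mem_univ j) ?_
          have hw1 : w j = 1 := (zmod2_cases (w j)).resolve_left hj
          rw [hw1]
          simp only [one_mul]
          rw [show (Finset.univ : Finset (ZMod 2)) = {0, 1} by decide,
            Finset.sum_pair (by decide : (0 : ZMod 2) ≠ 1)]
          norm_num [eps, ZMod.val_one]


/-- For an `m × m` binary symmetric matrix `P` with zero diagonal, the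
character sum `S = ∑_{x ∈ 𝔽₂^m} i^{x P xᵀ}` (the quadratic form being evaluated in `ℤ₄`)
satisfies `S² = 2^m ∑_{z : zP = 0} i^{z P zᵀ}`, the sum ranging over the `𝔽₂`-kernel of
`P`. -/
theorem character_sum_squared_eq_kernel_sum
    (m : ℕ) (hm : 0 < m) (P : Matrix (Fin m) (Fin m) (ZMod 2))
    (hsymm : P.IsSymm) (hdiag : ∀ i, P i i = 0) :
    (∑ x : Fin m → ZMod 2, zeta (qform P x)) ^ 2 =
      2 ^ m *
        ∑ z ∈ Finset.univ.filter (fun z : Fin m → ZMod 2 => Matrix.vecMul z P = 0),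
          zeta (qform P z) := by
  classical
  simp only [zeta_qform P hsymm hdiag]
  rw [sq, Finset.sum_mul_sum]
  have key : ∀ x : Fin m → ZMod 2,
      ∑ y : Fin m → ZMod 2, eps (qf2 P x) * eps (qf2 P y)
      = ∑ z : Fin m → ZMod 2, eps (qf2 P z) * eps (∑ j, Matrix.vecMul z P j * x j) := by
    intro x
    rw [← Equiv.sum_comp (Equiv.addLeft x) (fun y => eps (qf2 P x) * eps (qf2 P y))]
    refine Finset.sum_congr rfl fun z _ => ?_
    have hA : (Equiv.addLeft x) z = x + z := rfl
    rw [hA, qf2_addv P hsymm hdiag x z, eps_add, eps_add, ← mul_assoc, ← mul_assoc,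
      eps_sq]
    ring
  rw [show (∑ x : Fin m → ZMod 2, ∑ y : Fin m → ZMod 2, eps (qf2 P x) * eps (qf2 P y))
      = ∑ x : Fin m → ZMod 2, ∑ z : Fin m → ZMod 2,
          eps (qf2 P z) * eps (∑ j, Matrix.vecMul z P j * x j) from
    Finset.sum_congr rfl fun x _ => key x]
  rw [Finset.sum_comm]
  have h2 : ∀ z : Fin m → ZMod 2,
      ∑ x : Fin m → ZMod 2, eps (qf2 P z) * eps (∑ j, Matrix.vecMul z P j * x j)
      = eps (qf2 P z) * (if Matrix.vecMul z P = 0 then (2:ℂ)^m else 0) := by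
    intro z
    rw [← Finset.mul_sum, eps_orth]
  simp only [h2]
  rw [Finset.mul_sum, Finset.sum_filter]
  refine Finset.sum_congr rfl fun z _ => ?_
  split_ifs <;> ring
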